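/- Let G be a loopoid over M and u ∈ M. Then the isotropy set G_u = {g ∈ G : α(g) = β(g) = u} carries a loop structure induced by the multiplication of G: every pair (g,h) ∈ G_u × G_u is composable with gh ∈ G_u; u ∈ G_u and ug = g = gu for all g ∈ G_u; and for every g ∈ G_u the maps h ↦ gh and h ↦ hg are bijections of G_u onto itself. -/

import Mathlib

/-- A semiloopoid over a set of units `M ⊆ G`: maps `α, β : G → M ⊆ G` fixing
units, a set `G₂` of composable pairs, and a partial multiplication `m : G₂ → G`
such that `α(g)g = g`, `gβ(g) = g`, and all left and right translations are
injective on their domains. -/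
structure Semiloopoid (G : Type*) where
  M : Set G
  α : G → G
  β : G → G
  α_mem : ∀ g : G, α g ∈ M
  β_mem : ∀ g : G, β g ∈ M
  α_unit : ∀ u ∈ M, α u = u
  β_unit : ∀ u ∈ M, β u = u
  G₂ : Set (G × G)
  mul : (g : G) → (h : G) → (g, h) ∈ G₂ → G
  unit_left_comp : ∀ g : G, (α g, g) ∈ G₂
  unit_left : ∀ g : G, mul (α g) g (unit_left_comp g) = g
  unit_right_comp : ∀ g : G, (g, β g) ∈ G₂
  unit_right : ∀ g : G, mul g (β g) (unit_right_comp g) = g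
  left_inj : ∀ (g h h' : G) (p : (g, h) ∈ G₂) (p' : (g, h') ∈ G₂),
    mul g h p = mul g h' p' → h = h'
  right_inj : ∀ (g h h' : G) (p : (h, g) ∈ G₂) (p' : (h', g) ∈ G₂),
    mul h g p = mul h' g p' → h = h'

/-- A loopoid over `M`: a semiloopoid such that `G₂ = {(g,h) : β(g) = α(h)}`,
`α(gh) = α(g)`, `β(gh) = β(h)`, and left (resp. right) translations are
bijections between the corresponding `α`-fibres (resp. `β`-fibres);
surjectivity is recorded below, injectivity being part of the semiloopoid
structure. -/
structure Loopoid (G : Type*) extends Semiloopoid G where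
  comp_iff : ∀ g h : G, (g, h) ∈ G₂ ↔ β g = α h
  α_mul : ∀ (g h : G) (p : (g, h) ∈ G₂), α (mul g h p) = α g
  β_mul : ∀ (g h : G) (p : (g, h) ∈ G₂), β (mul g h p) = β h
  left_surj : ∀ g k : G, α k = α g → ∃ (h : G) (p : (g, h) ∈ G₂), mul g h p = k
  right_surj : ∀ g k : G, β k = β g → ∃ (h : G) (p : (h, g) ∈ G₂), mul h g p = k

namespace Semiloopoid

variable {G : Type*} (L : Semiloopoid G)

theorem mul_congr {g h g' h' : G} (eg : g = g') (eh : h = h') (p : (g, h) ∈ L.G₂)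
    (p' : (g', h') ∈ L.G₂) : L.mul g h p = L.mul g' h' p' := by
  subst eg eh; rfl

theorem mul_eq_right_of_eq_α {u g : G} (hg : L.α g = u) (p : (u, g) ∈ L.G₂) :
    L.mul u g p = g :=
  (L.mul_congr hg.symm rfl p (L.unit_left_comp g)).trans (L.unit_left g)

theorem mul_eq_left_of_eq_β {g u : G} (hg : L.β g = u) (p : (g, u) ∈ L.G₂) :
    L.mul g u p = g :=
  (L.mul_congr rfl hg.symm p (L.unit_right_comp g)).trans (L.unit_right g)

end Semiloopoid

namespace Loopoid

variable {G : Type*} (L : Loopoid G)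

theorem exists_mul_eq_of_α_eq {g k : G} (hk : L.α k = L.α g) :
    ∃ (h : G) (p : (g, h) ∈ L.G₂), L.α h = L.β g ∧ L.β h = L.β k ∧ L.mul g h p = k := by
  obtain ⟨h, p, rfl⟩ := L.left_surj g k hk
  exact ⟨h, p, ((L.comp_iff g h).1 p).symm, (L.β_mul g h p).symm, rfl⟩

theorem exists_mul_eq_of_β_eq {g k : G} (hk : L.β k = L.β g) :
    ∃ (h : G) (p : (h, g) ∈ L.G₂), L.β h = L.α g ∧ L.α h = L.α k ∧ L.mul h g p = k := by
  obtain ⟨h, p, rfl⟩ := L.right_surj g k hk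
  exact ⟨h, p, (L.comp_iff h g).1 p, (L.α_mul h g p).symm, rfl⟩

def isotropy (u : G) : Set G := {g | L.α g = u ∧ L.β g = u}

variable {u : G}

theorem mem_isotropy_of_mem_M (hu : u ∈ L.M) : u ∈ L.isotropy u :=
  ⟨L.α_unit u hu, L.β_unit u hu⟩

theorem comp_of_mem_isotropy {g h : G} (hg : g ∈ L.isotropy u) (hh : h ∈ L.isotropy u) :
    (g, h) ∈ L.G₂ :=
  (L.comp_iff g h).2 (hg.2.trans hh.1.symm)

theorem mul_mem_isotropy {g h : G} (hg : g ∈ L.isotropy u) (hh : h ∈ L.isotropy u)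
    (p : (g, h) ∈ L.G₂) : L.mul g h p ∈ L.isotropy u :=
  ⟨(L.α_mul g h p).trans hg.1, (L.β_mul g h p).trans hh.2⟩

theorem exists_mem_isotropy_mul_left_eq {g k : G} (hg : g ∈ L.isotropy u)
    (hk : k ∈ L.isotropy u) : ∃ h ∈ L.isotropy u, ∃ p : (g, h) ∈ L.G₂, L.mul g h p = k := by
  obtain ⟨h, p, hα, hβ, hmul⟩ := L.exists_mul_eq_of_α_eq (hk.1.trans hg.1.symm)
  exact ⟨h, ⟨hα.trans hg.2, hβ.trans hk.2⟩, p, hmul⟩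

theorem exists_mem_isotropy_mul_right_eq {g k : G} (hg : g ∈ L.isotropy u)
    (hk : k ∈ L.isotropy u) : ∃ h ∈ L.isotropy u, ∃ p : (h, g) ∈ L.G₂, L.mul h g p = k := by
  obtain ⟨h, p, hβ, hα, hmul⟩ := L.exists_mul_eq_of_β_eq (hk.2.trans hg.2.symm)
  exact ⟨h, ⟨hα.trans hk.1, hβ.trans hg.1⟩, p, hmul⟩

end Loopoid

/-- Let `G` be a loopoid over `M` and `u ∈ M`. Then the isotropy set
`G_u = {g : α(g) = β(g) = u}` carries a loop structure induced by the
multiplication of `G`: every pair of elements of `G_u` is composable with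
product in `G_u`; `u ∈ G_u` is a two-sided unit; and for every `g ∈ G_u` the
left and right translations by `g` are bijections of `G_u` onto itself. -/
theorem loopoid_isotropy_loop {G : Type*} (L : Loopoid G) (u : G) (hu : u ∈ L.M) :
    -- G_u is closed under the (everywhere defined) multiplication
    (∀ g h : G, (L.α g = u ∧ L.β g = u) → (L.α h = u ∧ L.β h = u) →
      ∃ p : (g, h) ∈ L.G₂, L.α (L.mul g h p) = u ∧ L.β (L.mul g h p) = u) ∧
    -- u belongs to G_u and is a two-sided unit
    (L.α u = u ∧ L.β u = u) ∧
    (∀ g : G, (L.α g = u ∧ L.β g = u) →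
      ∃ (p : (u, g) ∈ L.G₂) (q : (g, u) ∈ L.G₂),
        L.mul u g p = g ∧ L.mul g u q = g) ∧
    -- left translations are bijections of G_u
    (∀ g : G, (L.α g = u ∧ L.β g = u) →
      (∀ h h' : G, (L.α h = u ∧ L.β h = u) → (L.α h' = u ∧ L.β h' = u) →
        ∀ (p : (g, h) ∈ L.G₂) (p' : (g, h') ∈ L.G₂),
          L.mul g h p = L.mul g h' p' → h = h') ∧
      (∀ k : G, (L.α k = u ∧ L.β k = u) →
        ∃ h : G, (L.α h = u ∧ L.β h = u) ∧
          ∃ p : (g, h) ∈ L.G₂, L.mul g h p = k)) ∧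
    -- right translations are bijections of G_u
    (∀ g : G, (L.α g = u ∧ L.β g = u) →
      (∀ h h' : G, (L.α h = u ∧ L.β h = u) → (L.α h' = u ∧ L.β h' = u) →
        ∀ (p : (h, g) ∈ L.G₂) (p' : (h', g) ∈ L.G₂),
          L.mul h g p = L.mul h' g p' → h = h') ∧
      (∀ k : G, (L.α k = u ∧ L.β k = u) →
        ∃ h : G, (L.α h = u ∧ L.β h = u) ∧
          ∃ p : (h, g) ∈ L.G₂, L.mul h g p = k)) := by
  have hu' : u ∈ L.isotropy u := L.mem_isotropy_of_mem_M hu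
  refine ⟨fun g h hg hh => ⟨L.comp_of_mem_isotropy hg hh, L.mul_mem_isotropy hg hh _⟩, hu',
    fun g hg => ?_, fun g hg => ?_, fun g hg => ?_⟩
  · exact ⟨L.comp_of_mem_isotropy hu' hg, L.comp_of_mem_isotropy hg hu',
      L.mul_eq_right_of_eq_α hg.1 _, L.mul_eq_left_of_eq_β hg.2 _⟩
  · exact ⟨fun h h' _ _ => L.left_inj g h h',
      fun k hk => L.exists_mem_isotropy_mul_left_eq hg hk⟩
  · exact ⟨fun h h' _ _ => L.right_inj g h h',
      fun k hk => L.exists_mem_isotropy_mul_right_eq hg hk⟩
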